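/- Let P be symmetric positive definite, Ā ∈ ℝ^{n×n} with P·Ā + Āᵀ·P ⪯ −γ·I, P ⪯ t·I, and 2·t·δ_max < γ for some t, γ > 0. Then for every diagonal matrix D with diagonal entries in [0, δ_max], the matrix A = Ā − D satisfies P·A + Aᵀ·P ≺ 0, and hence A is Hurwitz stable. -/

import Mathlib

/-!
Write `D = diagonal d`. Expanding `(δx + Dx)ᵀ P (δx + Dx) ≥ 0` gives
`2δ xᵀPDx ≥ -(δ² xᵀPx + (Dx)ᵀP(Dx)) ≥ -2tδ² ‖x‖²`, because `P ⪯ t I` and `‖Dx‖ ≤ δ ‖x‖`.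
Hence `PD + DP ⪰ -2tδ I`, and `-(P(Ā - D) + (Ā - D)ᵀP) ⪰ (γ - 2tδ) I ≻ 0`.
Stability is Lyapunov's argument: for an eigenpair `Av = μv` over `ℂ`,
`v* (PA + AᵀP) v = 2 Re μ · v* P v`, and both quadratic forms have positive real part.
-/

open Matrix

namespace Matrix

variable {ι : Type*} [Fintype ι]

lemma IsHermitian.dotProduct_mulVec_comm {P : Matrix ι ι ℝ} (hP : P.IsHermitian) (u w : ι → ℝ) :
    u ⬝ᵥ (P *ᵥ w) = w ⬝ᵥ (P *ᵥ u) := by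
  rw [dotProduct_mulVec, dotProduct_comm, ← vecMul_transpose,
    ← conjTranspose_eq_transpose_of_trivial, hP.eq]

lemma PosSemidef.neg_le_two_mul_dotProduct_mulVec {P : Matrix ι ι ℝ} (hP : P.PosSemidef) (s : ℝ)
    (u w : ι → ℝ) :
    -(s ^ 2 * (u ⬝ᵥ (P *ᵥ u)) + w ⬝ᵥ (P *ᵥ w)) ≤ 2 * s * (u ⬝ᵥ (P *ᵥ w)) := by
  have h := hP.dotProduct_mulVec_nonneg (s • u + w)
  simp only [star_trivial, mulVec_add, mulVec_smul, dotProduct_add, add_dotProduct, dotProduct_smul,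
    smul_dotProduct, smul_eq_mul, hP.isHermitian.dotProduct_mulVec_comm w u] at h
  linarith

lemma dotProduct_mulVec_le_of_posSemidef_smul_one_sub [DecidableEq ι] {P : Matrix ι ι ℝ} {t : ℝ}
    (h : (t • 1 - P).PosSemidef) (x : ι → ℝ) : x ⬝ᵥ (P *ᵥ x) ≤ t * (x ⬝ᵥ x) := by
  have hx := h.dotProduct_mulVec_nonneg x
  simp only [star_trivial, sub_mulVec, smul_mulVec, one_mulVec, dotProduct_sub, dotProduct_smul,
    smul_eq_mul] at hx
  linarith

lemma dotProduct_diagonal_mulVec_self_le [DecidableEq ι] {d : ι → ℝ} {δ : ℝ} (hd : ∀ k, |d k| ≤ δ)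
    (x : ι → ℝ) : (diagonal d *ᵥ x) ⬝ᵥ (diagonal d *ᵥ x) ≤ δ ^ 2 * (x ⬝ᵥ x) := by
  simp only [dotProduct, mulVec_diagonal, Finset.mul_sum]
  refine Finset.sum_le_sum fun k _ => ?_
  have : d k ^ 2 ≤ δ ^ 2 := sq_le_sq' (neg_le_of_abs_le (hd k)) (le_of_abs_le (hd k))
  nlinarith [mul_self_nonneg (x k)]

lemma posSemidef_mul_diagonal_add_diagonal_mul_add_smul_one [DecidableEq ι] {P : Matrix ι ι ℝ}
    {t δ : ℝ} {d : ι → ℝ} (hP : P.PosSemidef) (hPt : (t • 1 - P).PosSemidef) (ht : 0 ≤ t)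
    (hδ : 0 < δ) (hd : ∀ k, |d k| ≤ δ) :
    (P * diagonal d + diagonal d * P + (2 * t * δ) • 1).PosSemidef := by
  have hPsymm : Pᵀ = P := by rw [← conjTranspose_eq_transpose_of_trivial, hP.isHermitian.eq]
  refine .of_dotProduct_mulVec_nonneg ?_ fun x => ?_
  · rw [IsHermitian, conjTranspose_eq_transpose_of_trivial]
    simp only [transpose_add, transpose_mul, transpose_smul, transpose_one, diagonal_transpose,
      hPsymm]
    abel
  set y := diagonal d *ᵥ x
  have hform : star x ⬝ᵥ ((P * diagonal d + diagonal d * P + (2 * t * δ) • 1) *ᵥ x)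
      = 2 * (x ⬝ᵥ (P *ᵥ y)) + 2 * t * δ * (x ⬝ᵥ x) := by
    have hxD : x ᵥ* diagonal d = y := by
      funext k; simp only [vecMul_diagonal, y, mulVec_diagonal, mul_comm]
    simp only [star_trivial, add_mulVec, ← mulVec_mulVec, smul_mulVec, one_mulVec, dotProduct_add,
      dotProduct_smul, smul_eq_mul, dotProduct_mulVec x (diagonal d), hxD,
      hP.isHermitian.dotProduct_mulVec_comm y x]
    ring
  have hpol := hP.neg_le_two_mul_dotProduct_mulVec δ x y
  have hPx := mul_le_mul_of_nonneg_left (dotProduct_mulVec_le_of_posSemidef_smul_one_sub hPt x)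
    (sq_nonneg δ)
  have hPy := dotProduct_mulVec_le_of_posSemidef_smul_one_sub hPt y
  have hy := mul_le_mul_of_nonneg_left (dotProduct_diagonal_mulVec_self_le hd x) ht
  rw [hform]
  refine (mul_nonneg_iff_of_pos_left (mul_pos two_pos hδ)).1 ?_
  linarith

lemma re_star_dotProduct_map_ofReal_mulVec (Q : Matrix ι ι ℝ) (v : ι → ℂ) :
    (star v ⬝ᵥ (Q.map Complex.ofReal *ᵥ v)).re =
      (fun k => (v k).re) ⬝ᵥ (Q *ᵥ fun k => (v k).re) +
        (fun k => (v k).im) ⬝ᵥ (Q *ᵥ fun k => (v k).im) := by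
  simp only [dotProduct, mulVec, Pi.star_apply, map_apply, Finset.mul_sum, Complex.re_sum,
    ← Finset.sum_add_distrib, Complex.mul_re, Complex.mul_im, Complex.ofReal_re, Complex.ofReal_im,
    Complex.star_def, Complex.conj_re, Complex.conj_im]
  congr! 2 with j _ k _
  ring

lemma PosDef.re_star_dotProduct_map_ofReal_mulVec_pos {Q : Matrix ι ι ℝ} (hQ : Q.PosDef)
    {v : ι → ℂ} (hv : v ≠ 0) : 0 < (star v ⬝ᵥ (Q.map Complex.ofReal *ᵥ v)).re := by
  rw [re_star_dotProduct_map_ofReal_mulVec]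
  have hnonneg (w : ι → ℝ) : 0 ≤ w ⬝ᵥ (Q *ᵥ w) := by
    simpa using hQ.posSemidef.dotProduct_mulVec_nonneg w
  have hpos {w : ι → ℝ} (hw : w ≠ 0) : 0 < w ⬝ᵥ (Q *ᵥ w) := by
    simpa using hQ.dotProduct_mulVec_pos hw
  obtain h | h : (fun k => (v k).re) ≠ 0 ∨ (fun k => (v k).im) ≠ 0 := by
    by_contra! h
    exact hv (funext fun k => Complex.ext (congrFun h.1 k) (congrFun h.2 k))
  · exact add_pos_of_pos_of_nonneg (hpos h) (hnonneg _)
  · exact add_pos_of_nonneg_of_pos (hnonneg _) (hpos h)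

theorem re_lt_zero_of_mem_spectrum_of_lyapunov [DecidableEq ι] {P A : Matrix ι ι ℝ}
    (hP : P.PosDef) (hLyap : (-(P * A + Aᵀ * P)).PosDef) {μ : ℂ}
    (hμ : μ ∈ spectrum ℂ (A.map Complex.ofReal)) : μ.re < 0 := by
  rw [← spectrum_toLin', ← Module.End.hasEigenvalue_iff_mem_spectrum] at hμ
  obtain ⟨v, hv⟩ := hμ.exists_hasEigenvector
  have hAv : A.map Complex.ofReal *ᵥ v = μ • v := by simpa using hv.apply_eq_smul
  set c := star v ⬝ᵥ (P.map Complex.ofReal *ᵥ v)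
  have hmap : (-(P * A + Aᵀ * P)).map Complex.ofReal
      = -(P.map Complex.ofReal * A.map Complex.ofReal
        + (A.map Complex.ofReal)ᴴ * P.map Complex.ofReal) := by
    have hT : (A.map Complex.ofReal)ᴴ = Aᵀ.map Complex.ofReal := by ext; simp
    rw [hT, Matrix.map_neg _ Complex.ofReal_neg, Matrix.map_add _ Complex.ofReal_add]
    exact congrArg _ (congrArg₂ _ (Matrix.map_mul (f := Complex.ofRealHom))
      (Matrix.map_mul (f := Complex.ofRealHom)))
  have hPA : star v ⬝ᵥ (P.map Complex.ofReal * A.map Complex.ofReal) *ᵥ v = μ * c := by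
    rw [← mulVec_mulVec, hAv, mulVec_smul, dotProduct_smul, smul_eq_mul]
  have hAP : star v ⬝ᵥ ((A.map Complex.ofReal)ᴴ * P.map Complex.ofReal) *ᵥ v = star μ * c := by
    rw [← mulVec_mulVec, dotProduct_mulVec, ← star_mulVec, hAv, star_smul, smul_dotProduct,
      smul_eq_mul]
  have key : star v ⬝ᵥ ((-(P * A + Aᵀ * P)).map Complex.ofReal *ᵥ v)
      = ((-(2 * μ.re) : ℝ) : ℂ) * c := by
    rw [hmap, neg_mulVec, add_mulVec, dotProduct_neg, dotProduct_add, hPA, hAP, ← add_mul,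
      Complex.star_def, Complex.add_conj, Complex.ofReal_neg, neg_mul]
  have hQv := hLyap.re_star_dotProduct_map_ofReal_mulVec_pos hv.2
  rw [key, Complex.re_ofReal_mul] at hQv
  nlinarith [hP.re_star_dotProduct_map_ofReal_mulVec_pos hv.2]

end Matrix

theorem stmt4_general {n : ℕ} (P Abar : Matrix (Fin n) (Fin n) ℝ)
    (hPpd : P.PosDef)
    (t γ δmax : ℝ) (ht : 0 < t) (hδmax : 0 < δmax)
    (hLyap : (-(γ : ℝ) • (1 : Matrix (Fin n) (Fin n) ℝ)
        - (P * Abar + Abarᵀ * P)).PosSemidef)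
    (hPt : ((t : ℝ) • (1 : Matrix (Fin n) (Fin n) ℝ) - P).PosSemidef)
    (hbnd : 2 * t * δmax < γ)
    (d : Fin n → ℝ) (hd : ∀ k, d k ∈ Set.Icc (0 : ℝ) δmax) :
    (-(P * (Abar - Matrix.diagonal d) + (Abar - Matrix.diagonal d)ᵀ * P)).PosDef ∧
      (∀ μ ∈ spectrum ℂ ((Abar - Matrix.diagonal d).map (Complex.ofReal)), μ.re < 0) := by
  have hsplit : -(P * (Abar - diagonal d) + (Abar - diagonal d)ᵀ * P)
      = (-γ • 1 - (P * Abar + Abarᵀ * P))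
        + (P * diagonal d + diagonal d * P + (2 * t * δmax) • 1) + (γ - 2 * t * δmax) • 1 := by
    simp only [mul_sub, sub_mul, transpose_sub, diagonal_transpose]
    module
  have hdiag : (P * diagonal d + diagonal d * P + (2 * t * δmax) • 1).PosSemidef :=
    posSemidef_mul_diagonal_add_diagonal_mul_add_smul_one hPpd.posSemidef hPt ht.le hδmax
      fun k => abs_le.2 ⟨by linarith [(hd k).1], (hd k).2⟩
  have hstable : (-(P * (Abar - diagonal d) + (Abar - diagonal d)ᵀ * P)).PosDef := by
    rw [hsplit]
    exact PosDef.posSemidef_add (hLyap.add hdiag) (PosDef.one.smul (by linarith))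
  exact ⟨hstable, fun μ hμ => re_lt_zero_of_mem_spectrum_of_lyapunov hPpd hstable hμ⟩

theorem stmt4 {n : ℕ} (P Abar : Matrix (Fin n) (Fin n) ℝ)
    (hP : P.IsHermitian) (hPpd : P.PosDef)
    (t γ δmax : ℝ) (ht : 0 < t) (hγ : 0 < γ) (hδmax : 0 < δmax)
    (hLyap : (-(γ : ℝ) • (1 : Matrix (Fin n) (Fin n) ℝ)
        - (P * Abar + Abarᵀ * P)).PosSemidef)
    (hPt : ((t : ℝ) • (1 : Matrix (Fin n) (Fin n) ℝ) - P).PosSemidef)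
    (hbnd : 2 * t * δmax < γ)
    (d : Fin n → ℝ) (hd : ∀ k, d k ∈ Set.Icc (0 : ℝ) δmax) :
    (-(P * (Abar - Matrix.diagonal d) + (Abar - Matrix.diagonal d)ᵀ * P)).PosDef ∧
      (∀ μ ∈ spectrum ℂ ((Abar - Matrix.diagonal d).map (Complex.ofReal)), μ.re < 0) :=
  stmt4_general P Abar hPpd t γ δmax ht hδmax hLyap hPt hbnd d hd
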